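/- Under the two-group heteroscedastic mixture model, suppose the distribution of T_1 is atomless and P(T_1 < t) > 0 for every t > t_0, where t_0 is the essential infimum of T_1. Then t ↦ α(t) is continuous on (t_0, 1], and for every α with t_0 < α < α(1) there exists t* ∈ (t_0, 1] such that α(t*) = α; that is, the oracle threshold attains the mFDR level exactly. -/

import Mathlib

open MeasureTheory ProbabilityTheory Set Filter

noncomputable section

/-- Density of the `N(0, s²)` distribution, i.e. the null density `f_{0,s}(x) = φ(x/s)/s`. -/
def gaussDens (s x : ℝ) : ℝ :=
  (s * Real.sqrt (2 * Real.pi))⁻¹ * Real.exp (-(x / s) ^ 2 / 2)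

/-- The alternative density `f_{1,s}(x) = ∫ φ((x−u)/s)/s dg_μ(u)`. -/
def altDens (gmu : Measure ℝ) (s x : ℝ) : ℝ :=
  ∫ u, gaussDens s (x - u) ∂gmu

/-- The mixture density `f_s(x) = (1−π) f_{0,s}(x) + π f_{1,s}(x)`. -/
def mixDens (p : ℝ) (gmu : Measure ℝ) (s x : ℝ) : ℝ :=
  (1 - p) * gaussDens s x + p * altDens gmu s x

/-- The oracle statistic `T(x, σ) = (1−π) f_{0,σ}(x) / f_σ(x) = P(θ = 0 | x, σ)`. -/
def Tstat (p : ℝ) (gmu : Measure ℝ) (s x : ℝ) : ℝ :=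
  (1 - p) * gaussDens s x / mixDens p gmu s x

/-- Marginal false discovery rate `mFDR(δ) = E[Σᵢ (1−θᵢ)δᵢ] / E[Σᵢ δᵢ]`. -/
def mFDR {Ω : Type} [MeasurableSpace Ω] (P : Measure Ω) {m : ℕ}
    (θ δ : Fin m → Ω → ℕ) : ℝ :=
  (∫ ω, ∑ i, (1 - (θ i ω : ℝ)) * (δ i ω : ℝ) ∂P) / ∫ ω, ∑ i, ((δ i ω : ℝ)) ∂P

/-- Expected number of true positives `ETP(δ) = E[Σᵢ θᵢδᵢ]`. -/
def ETP {Ω : Type} [MeasurableSpace Ω] (P : Measure Ω) {m : ℕ}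
    (θ δ : Fin m → Ω → ℕ) : ℝ :=
  ∫ ω, ∑ i, (θ i ω : ℝ) * (δ i ω : ℝ) ∂P

end

/-! Because each θᵢ takes only the values 0 and 1, the two laws in the model determine the joint
law of (σᵢ, Xᵢ), so the Tᵢ are identically distributed and α(t) = E[T₁; T₁ < t] / P(T₁ < t) is the
mean of the law ν of T₁ below t. As ν has no atoms, numerator and denominator are continuous in t
by dominated convergence, and the denominator is positive on (t₀, ∞). The mean below t is at most t,
so α((t₀ + a)/2) < a, and the intermediate value theorem on [(t₀ + a)/2, 1] yields t*. -/

section Model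

theorem gaussDens_nonneg {s : ℝ} (hs : 0 ≤ s) (x : ℝ) : 0 ≤ gaussDens s x :=
  mul_nonneg (inv_nonneg.2 (mul_nonneg hs (Real.sqrt_nonneg _))) (Real.exp_pos _).le

theorem gaussDens_nonpos {s : ℝ} (hs : s ≤ 0) (x : ℝ) : gaussDens s x ≤ 0 :=
  mul_nonpos_of_nonpos_of_nonneg (inv_nonpos.2 (mul_nonpos_of_nonpos_of_nonneg hs
    (Real.sqrt_nonneg _))) (Real.exp_pos _).le

theorem div_add_mem_Icc {a b : ℝ} (ha : 0 ≤ a) (hb : 0 ≤ b) : a / (a + b) ∈ Icc (0 : ℝ) 1 :=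
  ⟨div_nonneg ha (add_nonneg ha hb), div_le_one_of_le₀ (le_add_of_nonneg_right hb)
    (add_nonneg ha hb)⟩

theorem Tstat_mem_Icc {p : ℝ} (hp : p ∈ Ioo (0 : ℝ) 1) (gmu : Measure ℝ) (s x : ℝ) :
    Tstat p gmu s x ∈ Icc (0 : ℝ) 1 := by
  have h1p : 0 ≤ 1 - p := by linarith [hp.2]
  rcases le_total 0 s with hs | hs
  · exact div_add_mem_Icc (mul_nonneg h1p (gaussDens_nonneg hs x))
      (mul_nonneg hp.1.le (integral_nonneg fun u => gaussDens_nonneg hs (x - u)))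
  · rw [Tstat, mixDens, ← neg_div_neg_eq, neg_add]
    exact div_add_mem_Icc
      (neg_nonneg.2 (mul_nonpos_of_nonneg_of_nonpos h1p (gaussDens_nonpos hs x)))
      (neg_nonneg.2 (mul_nonpos_of_nonneg_of_nonpos hp.1.le
        (integral_nonpos fun u => gaussDens_nonpos hs (x - u))))

theorem measurable_gaussDens_uncurry : Measurable fun q : ℝ × ℝ => gaussDens q.1 q.2 := by
  unfold gaussDens
  fun_prop

theorem measurable_altDens_uncurry (gmu : Measure ℝ) [SFinite gmu] :
    Measurable fun q : ℝ × ℝ => altDens gmu q.1 q.2 :=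
  (measurable_gaussDens_uncurry.comp (measurable_fst.fst.prodMk
    (measurable_fst.snd.sub measurable_snd))).stronglyMeasurable.integral_prod_right'.measurable

theorem measurable_Tstat_uncurry (p : ℝ) (gmu : Measure ℝ) [SFinite gmu] :
    Measurable fun q : ℝ × ℝ => Tstat p gmu q.1 q.2 := by
  unfold Tstat mixDens
  have := measurable_gaussDens_uncurry
  have := measurable_altDens_uncurry gmu
  fun_prop

end Model

section LowerTail

variable {ν : Measure ℝ}

theorem continuous_setIntegral_Iio [NullSingletonClass ν] {g : ℝ → ℝ} (hg : Integrable g ν) :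
    Continuous fun t => ∫ x in Iio t, g x ∂ν := by
  refine continuous_iff_continuousAt.2 fun t₀ => ?_
  simp_rw [← integral_indicator measurableSet_Iio]
  refine continuousAt_of_dominated (bound := fun x => ‖g x‖)
    (.of_forall fun t => hg.aestronglyMeasurable.indicator measurableSet_Iio)
    (.of_forall fun t => ae_of_all _ fun x => norm_indicator_le_norm_self _ _)
    hg.norm ?_
  have hne : ∀ᵐ x ∂ν, x ≠ t₀ := by simp [ae_iff]
  filter_upwards [hne] with x hx
  rcases hx.lt_or_gt with hlt | hgt
  · refine continuousAt_const.congr (f := fun _ => g x) ?_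
    filter_upwards [lt_mem_nhds hlt] with t ht using (indicator_of_mem (mem_Iio.2 ht) g).symm
  · refine continuousAt_const.congr (f := fun _ => 0) ?_
    filter_upwards [gt_mem_nhds hgt] with t ht
    exact (indicator_of_notMem (notMem_Iio.2 ht.le) g).symm

theorem setIntegral_Iio_le_mul [IsFiniteMeasure ν] (hint : Integrable (fun x : ℝ => x) ν)
    (t : ℝ) : ∫ x in Iio t, x ∂ν ≤ t * ν.real (Iio t) := by
  have h := setIntegral_mono_on hint.integrableOn (integrableOn_const (measure_ne_top _ _))
    measurableSet_Iio fun x hx => (mem_Iio.1 hx).le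
  rwa [setIntegral_const, smul_eq_mul, mul_comm] at h

/-- For `ν` the law of `T₁` this is the mFDR `α(t)`; it is `0` when `ν (Iio t) = 0`. -/
noncomputable def lowerTailMean (ν : Measure ℝ) (t : ℝ) : ℝ :=
  (∫ x in Iio t, x ∂ν) / ν.real (Iio t)

theorem lowerTailMean_le [IsFiniteMeasure ν] (hint : Integrable (fun x : ℝ => x) ν) {t : ℝ}
    (ht : 0 < ν.real (Iio t) ∨ 0 ≤ t) : lowerTailMean ν t ≤ t := by
  rcases ht with hpos | hnonneg
  · exact (div_le_iff₀ hpos).2 (setIntegral_Iio_le_mul hint t)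
  · exact div_le_of_le_mul₀ measureReal_nonneg hnonneg (setIntegral_Iio_le_mul hint t)

variable [IsFiniteMeasure ν] [NullSingletonClass ν] {t₀ : ℝ}

theorem continuousOn_lowerTailMean (hint : Integrable (fun x : ℝ => x) ν)
    (hpos : ∀ t, t₀ < t → 0 < ν.real (Iio t)) : ContinuousOn (lowerTailMean ν) (Ioi t₀) := by
  have hcdf : Continuous fun t => ν.real (Iio t) := by
    simpa using continuous_setIntegral_Iio (integrable_const (1 : ℝ) : Integrable _ ν)
  exact fun t ht => ((continuous_setIntegral_Iio hint).continuousAt.div hcdf.continuousAt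
    (hpos t ht).ne').continuousWithinAt

theorem exists_lowerTailMean_eq (hint : Integrable (fun x : ℝ => x) ν)
    (hpos : ∀ t, t₀ < t → 0 < ν.real (Iio t)) {a : ℝ} (ha : a ∈ Ioo t₀ (lowerTailMean ν 1)) :
    ∃ t ∈ Ioc t₀ 1, lowerTailMean ν t = a := by
  obtain ⟨ha₀, ha₁⟩ := ha
  set s := (t₀ + a) / 2 with hs_def
  have hs : t₀ < s := by linarith
  have hsa : lowerTailMean ν s < a :=
    (lowerTailMean_le hint (.inl (hpos s hs))).trans_lt (by linarith)
  have hs1 : s ≤ 1 := by linarith [lowerTailMean_le hint (t := 1) (.inr zero_le_one)]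
  obtain ⟨t, ht, hta⟩ := intermediate_value_Icc hs1
    ((continuousOn_lowerTailMean hint hpos).mono fun x hx => hs.trans_le hx.1) ⟨hsa.le, ha₁.le⟩
  exact ⟨t, ⟨hs.trans_le ht.1, ht.2⟩, hta⟩

theorem mul_ite_lt_eq_indicator (g : ℝ → ℝ) (t : ℝ) :
    (fun x => g x * if x < t then (1 : ℝ) else 0) = (Iio t).indicator g := by
  ext x
  simp [indicator_apply, mul_ite]

theorem ite_lt_eq_indicator (t : ℝ) :
    (fun x : ℝ => if x < t then (1 : ℝ) else 0) = (Iio t).indicator 1 := by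
  ext x
  simp [indicator_apply]

end LowerTail

section IdentDistrib

variable {Ω : Type*} [MeasurableSpace Ω] {P : Measure Ω}

theorem measureReal_eq_add_of_le_one [IsFiniteMeasure P] {θ : Ω → ℕ} (hθ : Measurable θ)
    (hθ1 : ∀ ω, θ ω ≤ 1) {S : Set Ω} (hS : MeasurableSet S) :
    P.real S = P.real {ω | θ ω = 0 ∧ ω ∈ S} + P.real {ω | θ ω = 1 ∧ ω ∈ S} := by
  have hsplit : S = {ω | θ ω = 0 ∧ ω ∈ S} ∪ {ω | θ ω = 1 ∧ ω ∈ S} := by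
    ext ω
    rcases Nat.le_one_iff_eq_zero_or_eq_one.1 (hθ1 ω) with h | h <;> simp [h]
  have hdisj : Disjoint {ω | θ ω = 0 ∧ ω ∈ S} {ω | θ ω = 1 ∧ ω ∈ S} :=
    disjoint_left.2 fun ω h₀ h₁ => by simp [h₀.1] at h₁
  conv_lhs => rw [hsplit]
  exact measureReal_union hdisj ((hθ (measurableSet_singleton 1)).inter hS)

theorem identDistrib_of_measureReal_preimage_prod_eq [IsFiniteMeasure P] {α β : Type*}
    [MeasurableSpace α] [MeasurableSpace β] {Y Z : Ω → α × β} (hY : Measurable Y)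
    (hZ : Measurable Z)
    (h : ∀ s t, MeasurableSet s → MeasurableSet t →
      P.real (Y ⁻¹' s ×ˢ t) = P.real (Z ⁻¹' s ×ˢ t)) :
    IdentDistrib Y Z P P where
  aemeasurable_fst := hY.aemeasurable
  aemeasurable_snd := hZ.aemeasurable
  map_eq := Measure.ext_prod fun hs ht => by
    rw [Measure.map_apply hY (hs.prod ht), Measure.map_apply hZ (hs.prod ht),
      ← measureReal_eq_measureReal_iff]
    exact h _ _ hs ht

theorem integral_sum_comp_of_identDistrib {ι : Type*} [Fintype ι] {Y : ι → Ω → ℝ} {j : ι}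
    (hY : ∀ i, IdentDistrib (Y i) (Y j) P P) {h : ℝ → ℝ} (hh : Measurable h)
    (hint : Integrable h (P.map (Y j))) :
    ∫ ω, ∑ i, h (Y i ω) ∂P = Fintype.card ι * ∫ x, h x ∂(P.map (Y j)) := by
  have hint_j : Integrable (h ∘ Y j) P :=
    (integrable_map_measure hh.aestronglyMeasurable (hY j).aemeasurable_fst).1 hint
  have hint_i : ∀ i, Integrable (fun ω => h (Y i ω)) P := fun i =>
    ((hY i).comp hh).integrable_iff.2 hint_j
  have heq : ∀ i, ∫ ω, h (Y i ω) ∂P = ∫ x, h x ∂(P.map (Y j)) := fun i =>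
    ((hY i).comp hh).integral_eq.trans
      (integral_map (hY j).aemeasurable_fst hh.aestronglyMeasurable).symm
  rw [integral_finsetSum _ fun i _ => hint_i i, Finset.sum_congr rfl fun i _ => heq i,
    Finset.sum_const, Finset.card_univ, nsmul_eq_mul]

theorem integral_sum_mul_ite_lt {ι : Type*} [Fintype ι] {Y : ι → Ω → ℝ} {j : ι}
    (hY : ∀ i, IdentDistrib (Y i) (Y j) P P) (hint : Integrable (fun x : ℝ => x) (P.map (Y j)))
    (t : ℝ) :
    ∫ ω, ∑ i, Y i ω * (if Y i ω < t then (1 : ℝ) else 0) ∂P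
      = Fintype.card ι * ∫ x in Iio t, x ∂(P.map (Y j)) := by
  rw [integral_sum_comp_of_identDistrib hY (h := fun x => x * if x < t then 1 else 0)
    (by rw [mul_ite_lt_eq_indicator]; exact measurable_id.indicator measurableSet_Iio)
    (by rw [mul_ite_lt_eq_indicator]; exact hint.indicator measurableSet_Iio),
    mul_ite_lt_eq_indicator, integral_indicator measurableSet_Iio]

theorem integral_sum_ite_lt [IsFiniteMeasure P] {ι : Type*} [Fintype ι] {Y : ι → Ω → ℝ} {j : ι}
    (hY : ∀ i, IdentDistrib (Y i) (Y j) P P) (t : ℝ) :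
    ∫ ω, ∑ i, (if Y i ω < t then (1 : ℝ) else 0) ∂P
      = Fintype.card ι * (P.map (Y j)).real (Iio t) := by
  rw [integral_sum_comp_of_identDistrib hY (h := fun x => if x < t then 1 else 0)
    (by rw [ite_lt_eq_indicator]; exact measurable_const.indicator measurableSet_Iio)
    (by rw [ite_lt_eq_indicator]; exact (integrable_const 1).indicator measurableSet_Iio),
    ite_lt_eq_indicator, integral_indicator_one measurableSet_Iio]

end IdentDistrib

theorem identDistrib_sig_X {Ω : Type*} [MeasurableSpace Ω] {P : Measure Ω} [IsFiniteMeasure P]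
    {m : ℕ} {p : ℝ} {gsig gmu : Measure ℝ} {θ : Fin m → Ω → ℕ} {sig X : Fin m → Ω → ℝ}
    (hθmeas : ∀ i, Measurable (θ i)) (hsigmeas : ∀ i, Measurable (sig i))
    (hXmeas : ∀ i, Measurable (X i)) (hθval : ∀ i ω, θ i ω ≤ 1)
    (hlaw0 : ∀ i, ∀ B A : Set ℝ, MeasurableSet B → MeasurableSet A →
      (P {ω | θ i ω = 0 ∧ sig i ω ∈ B ∧ X i ω ∈ A}).toReal
        = (1 - p) * ∫ s in B, (∫ x in A, gaussDens s x) ∂gsig)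
    (hlaw1 : ∀ i, ∀ B A : Set ℝ, MeasurableSet B → MeasurableSet A →
      (P {ω | θ i ω = 1 ∧ sig i ω ∈ B ∧ X i ω ∈ A}).toReal
        = p * ∫ s in B, (∫ x in A, altDens gmu s x) ∂gsig)
    (i j : Fin m) :
    IdentDistrib (fun ω => (sig i ω, X i ω)) (fun ω => (sig j ω, X j ω)) P P := by
  refine identDistrib_of_measureReal_preimage_prod_eq ((hsigmeas i).prodMk (hXmeas i))
    ((hsigmeas j).prodMk (hXmeas j)) fun B A hB hA => ?_
  show P.real {ω | sig i ω ∈ B ∧ X i ω ∈ A} = P.real {ω | sig j ω ∈ B ∧ X j ω ∈ A}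
  rw [measureReal_eq_add_of_le_one (hθmeas i) (hθval i)
      (S := {ω | sig i ω ∈ B ∧ X i ω ∈ A}) ((hsigmeas i hB).inter (hXmeas i hA)),
    measureReal_eq_add_of_le_one (hθmeas j) (hθval j)
      (S := {ω | sig j ω ∈ B ∧ X j ω ∈ A}) ((hsigmeas j hB).inter (hXmeas j hA))]
  exact congrArg₂ (· + ·) ((hlaw0 i B A hB hA).trans (hlaw0 j B A hB hA).symm)
    ((hlaw1 i B A hB hA).trans (hlaw1 j B A hB hA).symm)


theorem statement4_general
    {Ω : Type} [MeasurableSpace Ω] (P : Measure Ω) [IsProbabilityMeasure P]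
    (m : ℕ) (p : ℝ) (hp : p ∈ Ioo (0 : ℝ) 1)
    (gsig gmu : Measure ℝ) [IsProbabilityMeasure gmu]
    (θ : Fin m → Ω → ℕ) (sig X : Fin m → Ω → ℝ)
    (hθmeas : ∀ i, Measurable (θ i)) (hsigmeas : ∀ i, Measurable (sig i))
    (hXmeas : ∀ i, Measurable (X i))
    (hθval : ∀ i ω, θ i ω ≤ 1)
    (hlaw0 : ∀ i, ∀ B A : Set ℝ, MeasurableSet B → MeasurableSet A →
      (P {ω | θ i ω = 0 ∧ sig i ω ∈ B ∧ X i ω ∈ A}).toReal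
        = (1 - p) * ∫ s in B, (∫ x in A, gaussDens s x) ∂gsig)
    (hlaw1 : ∀ i, ∀ B A : Set ℝ, MeasurableSet B → MeasurableSet A →
      (P {ω | θ i ω = 1 ∧ sig i ω ∈ B ∧ X i ω ∈ A}).toReal
        = p * ∫ s in B, (∫ x in A, altDens gmu s x) ∂gsig)
    (hm : 0 < m)
    (alphaFun : ℝ → ℝ)
    (halphaFun : ∀ t : ℝ, alphaFun t =
      (∫ ω, ∑ i, Tstat p gmu (sig i ω) (X i ω) *
          (if Tstat p gmu (sig i ω) (X i ω) < t then (1 : ℝ) else 0) ∂P) /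
        (∫ ω, ∑ i, (if Tstat p gmu (sig i ω) (X i ω) < t then (1 : ℝ) else 0) ∂P))
    (t₀ : ℝ)
    (hatomless : ∀ c : ℝ, P {ω | Tstat p gmu (sig ⟨0, hm⟩ ω) (X ⟨0, hm⟩ ω) = c} = 0)
    (hpos : ∀ t : ℝ, t₀ < t →
      0 < P {ω | Tstat p gmu (sig ⟨0, hm⟩ ω) (X ⟨0, hm⟩ ω) < t}) :
    ContinuousOn alphaFun (Ioc t₀ 1) ∧
    ∀ a : ℝ, a ∈ Ioo t₀ (alphaFun 1) → ∃ tstar ∈ Ioc t₀ 1, alphaFun tstar = a := by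
  set i₀ : Fin m := ⟨0, hm⟩
  set T : Fin m → Ω → ℝ := fun i ω => Tstat p gmu (sig i ω) (X i ω)
  have hTmeas : ∀ i, Measurable (T i) := fun i =>
    (measurable_Tstat_uncurry p gmu).comp ((hsigmeas i).prodMk (hXmeas i))
  have hT : ∀ i, IdentDistrib (T i) (T i₀) P P := fun i =>
    (identDistrib_sig_X hθmeas hsigmeas hXmeas hθval hlaw0 hlaw1 i i₀).comp
      (measurable_Tstat_uncurry p gmu)
  set ν := P.map (T i₀)
  have hν : ∀ s, MeasurableSet s → ν s = P (T i₀ ⁻¹' s) := fun s hs =>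
    Measure.map_apply (hTmeas i₀) hs
  have : NullSingletonClass ν :=
    ⟨fun c => (hν _ (measurableSet_singleton c)).trans (hatomless c)⟩
  have hint : Integrable (fun x : ℝ => x) ν :=
    (integrable_map_measure aestronglyMeasurable_id (hTmeas i₀).aemeasurable).2
      (.of_bound (hTmeas i₀).aestronglyMeasurable 1 (ae_of_all _ fun ω =>
        have hT01 := Tstat_mem_Icc hp gmu (sig i₀ ω) (X i₀ ω)
        (Real.norm_of_nonneg hT01.1).trans_le hT01.2))
  have hpos' : ∀ t, t₀ < t → 0 < ν.real (Iio t) := fun t ht => by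
    rw [measureReal_def, hν _ measurableSet_Iio]
    exact ENNReal.toReal_pos (hpos t ht).ne' (measure_ne_top _ _)
  have hα : alphaFun = lowerTailMean ν := funext fun t => by
    rw [halphaFun, integral_sum_mul_ite_lt hT hint, integral_sum_ite_lt hT, Fintype.card_fin,
      mul_div_mul_left _ _ (Nat.cast_ne_zero.2 hm.ne')]
    rfl
  rw [hα]
  exact ⟨(continuousOn_lowerTailMean hint hpos').mono Ioc_subset_Ioi_self,
    fun a ha => exists_lowerTailMean_eq hint hpos' ha⟩

/-- if the distribution of `T₁` is atomless and `P(T₁ < t) > 0` for all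
`t > t₀` (where `t₀` is the essential infimum of `T₁`), then `t ↦ α(t)` is continuous on
`(t₀, 1]` and every level `α ∈ (t₀, α(1))` is attained exactly: `α(t*) = α` for some
`t* ∈ (t₀, 1]`. -/
theorem statement4
    {Ω : Type} [MeasurableSpace Ω] (P : Measure Ω) [IsProbabilityMeasure P]
    (m : ℕ) (p : ℝ) (hp : p ∈ Ioo (0 : ℝ) 1)
    (gsig gmu : Measure ℝ) [IsProbabilityMeasure gsig] [IsProbabilityMeasure gmu]
    (hgsig : gsig (Iic 0) = 0)
    (θ : Fin m → Ω → ℕ) (sig X : Fin m → Ω → ℝ)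
    (hθmeas : ∀ i, Measurable (θ i)) (hsigmeas : ∀ i, Measurable (sig i))
    (hXmeas : ∀ i, Measurable (X i))
    (hθval : ∀ i ω, θ i ω ≤ 1)
    (hindep : iIndepFun
      (fun i ω => (θ i ω, sig i ω, X i ω)) P)
    (hlaw0 : ∀ i, ∀ B A : Set ℝ, MeasurableSet B → MeasurableSet A →
      (P {ω | θ i ω = 0 ∧ sig i ω ∈ B ∧ X i ω ∈ A}).toReal
        = (1 - p) * ∫ s in B, (∫ x in A, gaussDens s x) ∂gsig)
    (hlaw1 : ∀ i, ∀ B A : Set ℝ, MeasurableSet B → MeasurableSet A →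
      (P {ω | θ i ω = 1 ∧ sig i ω ∈ B ∧ X i ω ∈ A}).toReal
        = p * ∫ s in B, (∫ x in A, altDens gmu s x) ∂gsig)
    (hm : 0 < m)
    (alphaFun : ℝ → ℝ)
    (halphaFun : ∀ t : ℝ, alphaFun t =
      (∫ ω, ∑ i, Tstat p gmu (sig i ω) (X i ω) *
          (if Tstat p gmu (sig i ω) (X i ω) < t then (1 : ℝ) else 0) ∂P) /
        (∫ ω, ∑ i, (if Tstat p gmu (sig i ω) (X i ω) < t then (1 : ℝ) else 0) ∂P))
    (t₀ : ℝ)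
    (ht₀ : t₀ = essInf (fun ω => Tstat p gmu (sig ⟨0, hm⟩ ω) (X ⟨0, hm⟩ ω)) P)
    (hatomless : ∀ c : ℝ, P {ω | Tstat p gmu (sig ⟨0, hm⟩ ω) (X ⟨0, hm⟩ ω) = c} = 0)
    (hpos : ∀ t : ℝ, t₀ < t →
      0 < P {ω | Tstat p gmu (sig ⟨0, hm⟩ ω) (X ⟨0, hm⟩ ω) < t}) :
    ContinuousOn alphaFun (Ioc t₀ 1) ∧
    ∀ a : ℝ, a ∈ Ioo t₀ (alphaFun 1) → ∃ tstar ∈ Ioc t₀ 1, alphaFun tstar = a :=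
  statement4_general P m p hp gsig gmu θ sig X hθmeas hsigmeas hXmeas hθval hlaw0 hlaw1 hm alphaFun
    halphaFun t₀ hatomless hpos
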